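/- arXiv:1803.01881 — 3 statements merged into one kernel-verified Lean document; each statement's English description precedes it below -/
import Mathlib

section
/- The graph product multiplier ⋆_Γ h_v is well-defined: its value on an element of ⋆_Γ G_v does not depend on the choice of reduced word expression for that element. -/
open scoped Matrix

/-- Positivity of a matrix over a C*-algebra: `M = Bᴴ * B` for some `B`. -/
def MatPos {n : ℕ} {A : Type*} [Ring A] [StarRing A]
    (M : Matrix (Fin n) (Fin n) A) : Prop :=
  ∃ B : Matrix (Fin n) (Fin n) A, M = Bᴴ * B

/-- A positive definite multiplier for an action `α : G →* Aut(A)`. -/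
def IsPDMultiplier {G : Type*} [Group G] {A : Type*} [CStarAlgebra A]
    (α : G →* (A ≃ₐ[ℂ] A)) (h : G → A) : Prop :=
  (∀ s : G, h s ∈ Set.center A) ∧
  ∀ (n : ℕ) (x : Fin n → G),
    MatPos (Matrix.of fun i j => α (x j) (h ((x i)⁻¹ * x j)))

/-- The commutators defining the graph product of groups. -/
def graphRels {V : Type*} (E : V → V → Prop) (G : V → Type*) [∀ v, Group (G v)] :
    Set (Monoid.CoprodI G) :=
  {x | ∃ (v w : V) (_ : E v w) (g : G v) (k : G w),
    x = Monoid.CoprodI.of g * Monoid.CoprodI.of k *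
      (Monoid.CoprodI.of g)⁻¹ * (Monoid.CoprodI.of k)⁻¹}

/-- The graph product of the groups `G v` over the graph `(V, E)`: the free
product modulo commutation of adjacent vertex groups. -/
def GraphProduct {V : Type*} (E : V → V → Prop) (G : V → Type*)
    [∀ v, Group (G v)] : Type _ :=
  Monoid.CoprodI G ⧸ Subgroup.normalClosure (graphRels E G)

instance {V : Type*} (E : V → V → Prop) (G : V → Type*) [∀ v, Group (G v)] :
    Group (GraphProduct E G) :=
  QuotientGroup.Quotient.group _

/-- The canonical map of a vertex group into the graph product. -/
def GraphProduct.of {V : Type*} (E : V → V → Prop) {G : V → Type*}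
    [∀ v, Group (G v)] {v : V} (g : G v) : GraphProduct E G :=
  QuotientGroup.mk (Monoid.CoprodI.of g)

/-- The element of the graph product given by a word of vertex-group letters. -/
def wordProd {V : Type*} (E : V → V → Prop) {G : V → Type*} [∀ v, Group (G v)]
    (l : List (Σ v, G v)) : GraphProduct E G :=
  (l.map fun p => GraphProduct.of E p.2).prod

/-- A vertex word is reduced if whenever two letters agree, some letter strictly
between them is not joined to them by an edge. -/
def VReduced {V : Type*} (E : V → V → Prop) (l : List V) : Prop :=
  ∀ k m : Fin l.length, (k : ℕ) < m → l.get k = l.get m →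
    ∃ p : Fin l.length, (k : ℕ) < p ∧ (p : ℕ) < m ∧ ¬ E (l.get k) (l.get p)

/-- A word of vertex-group letters is reduced if all letters are nontrivial and
its underlying vertex word is reduced. -/
def GReduced {V : Type*} (E : V → V → Prop) {G : V → Type*} [∀ v, Group (G v)]
    (l : List (Σ v, G v)) : Prop :=
  (∀ p ∈ l, p.2 ≠ 1) ∧ VReduced E (l.map Sigma.fst)

/-- The value of the graph product multiplier `⋆_Γ h_v` on a reduced word
`s₁ ⋯ sₙ`: the ordered product `∏_j α((s_{j+1}⋯sₙ)⁻¹)(h_{v_j}(s_j))`. -/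
def hWord {V : Type*} (E : V → V → Prop) {G : V → Type*} [∀ v, Group (G v)]
    {A : Type*} [CStarAlgebra A]
    (α : GraphProduct E G →* (A ≃ₐ[ℂ] A)) (hv : ∀ v, G v → A) :
    List (Σ v, G v) → A
  | [] => 1
  | p :: l => α ((wordProd E l)⁻¹) (hv p.1 p.2) * hWord E α hv l


namespace GPAux

variable {V : Type*} (E : V → V → Prop)

/-- Recursive "head condition": `v` cannot be shuffled to the front of `M`. -/
def HdR (v : V) : List V → Prop
  | [] => True
  | d :: M => v ≠ d ∧ (E v d → HdR v M)

/-- Recursive reducedness. -/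
def RedR : List V → Prop
  | [] => True
  | c :: M => HdR E c M ∧ RedR M

lemma hdR_iff (c : V) (M : List V) :
    HdR E c M ↔ ∀ m : Fin M.length, M.get m = c →
      ∃ p : Fin M.length, (p : ℕ) < m ∧ ¬ E c (M.get p) := by
  induction M with
  | nil => simp [HdR]
  | cons d M ih =>
    constructor
    · rintro ⟨hne, hE⟩ ⟨m, hm⟩ hget
      match m with
      | 0 => exact absurd hget.symm hne
      | Nat.succ m =>
        by_cases hcd : E c d
        · obtain ⟨⟨p, hp⟩, hpm, hpE⟩ := (ih.mp (hE hcd)) ⟨m, by simpa using hm⟩ (by simpa using hget)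
          exact ⟨⟨p + 1, by simpa using hp⟩, by simpa using hpm, by simpa using hpE⟩
        · exact ⟨⟨0, by simp⟩, by simp, by simpa using hcd⟩
    · intro h
      constructor
      · rintro rfl
        obtain ⟨p, hp, _⟩ := h ⟨0, by simp⟩ (by simp)
        simp at hp
      · intro hcd
        rw [ih]
        rintro ⟨m, hm⟩ hget
        obtain ⟨⟨p, hp⟩, hpm, hpE⟩ := h ⟨m + 1, by simpa using hm⟩ (by simpa using hget)
        match p, hp with
        | 0, _ => exact absurd hcd (by simpa using hpE)
        | Nat.succ p, hp =>
          exact ⟨⟨p, by simpa using hp⟩, by simpa using hpm, by simpa using hpE⟩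

lemma vred_cons (c : V) (M : List V) :
    VReduced E (c :: M) ↔
      (∀ m : Fin M.length, M.get m = c →
        ∃ p : Fin M.length, (p : ℕ) < m ∧ ¬ E c (M.get p)) ∧ VReduced E M := by
  constructor
  · intro h
    refine ⟨?_, ?_⟩
    · rintro ⟨m, hm⟩ hget
      obtain ⟨⟨p, hp⟩, h0p, hpm, hpE⟩ :=
        h ⟨0, by simp⟩ ⟨m + 1, by simpa using hm⟩ (by simp) (by simpa using hget.symm)
      match p, hp with
      | Nat.succ p, hp =>
        exact ⟨⟨p, by simpa using hp⟩, by simpa using hpm, by simpa using hpE⟩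
    · rintro ⟨k, hk⟩ ⟨m, hm⟩ hkm hget
      obtain ⟨⟨p, hp⟩, hkp, hpm, hpE⟩ :=
        h ⟨k + 1, by simpa using hk⟩ ⟨m + 1, by simpa using hm⟩ (by simpa using hkm)
          (by simpa using hget)
      match p, hp with
      | Nat.succ p, hp =>
        exact ⟨⟨p, by simpa using hp⟩, by simpa using hkp, by simpa using hpm,
          by simpa using hpE⟩
  · rintro ⟨h0, h⟩ ⟨k, hk⟩ ⟨m, hm⟩ hkm hget
    match k, hk, m, hm with
    | 0, _, Nat.succ m, hm =>
      obtain ⟨⟨p, hp⟩, hpm, hpE⟩ := h0 ⟨m, by simpa using hm⟩ (by simpa using hget.symm)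
      exact ⟨⟨p + 1, by simpa using hp⟩, by simpa, by simpa using hpm, by simpa using hpE⟩
    | Nat.succ k, hk, Nat.succ m, hm =>
      obtain ⟨⟨p, hp⟩, hkp, hpm, hpE⟩ :=
        h ⟨k, by simpa using hk⟩ ⟨m, by simpa using hm⟩ (by simpa using hkm)
          (by simpa using hget)
      exact ⟨⟨p + 1, by simpa using hp⟩, by simpa using hkp, by simpa using hpm,
        by simpa using hpE⟩

lemma vred_iff (M : List V) : VReduced E M ↔ RedR E M := by
  induction M with
  | nil => simp [RedR]; intro k; exact absurd k.isLt (by simp)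
  | cons c M ih => rw [vred_cons, RedR, hdR_iff, ih, and_comm]


variable {E} in
lemma hdR_swap (hsymm : Symmetric E) {A B : V} (hAB : E A B) (c : V) :
    ∀ L₁ L₂ : List V, HdR E c (L₁ ++ A :: B :: L₂) → HdR E c (L₁ ++ B :: A :: L₂) := by
  intro L₁
  induction L₁ with
  | nil =>
    rintro L₂ ⟨hcA, h⟩
    exact ⟨fun hcB => (h (hcB ▸ hsymm hAB)).1 hcB,
      fun hcB => ⟨hcA, fun hcAe => (h hcAe).2 hcB⟩⟩
  | cons d L₁ ih =>
    rintro L₂ ⟨hcd, h⟩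
    exact ⟨hcd, fun hE => ih L₂ (h hE)⟩

variable {E} in
lemma redR_swap (hsymm : Symmetric E) (hirr : ∀ v, ¬ E v v) {A B : V} (hAB : E A B) :
    ∀ L₁ L₂ : List V, RedR E (L₁ ++ A :: B :: L₂) → RedR E (L₁ ++ B :: A :: L₂) := by
  intro L₁
  induction L₁ with
  | nil =>
    rintro L₂ ⟨hA, hB, hL⟩
    have hne : A ≠ B := fun h => hirr A (h ▸ hAB)
    exact ⟨⟨fun h => hne h.symm, fun _ => hB⟩, hA.2 hAB, hL⟩
  | cons c L₁ ih =>
    rintro L₂ ⟨hc, h⟩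
    exact ⟨hdR_swap hsymm hAB c L₁ L₂ hc, ih L₂ h⟩


section Letters

variable {G : V → Type*} [∀ v, Group (G v)]

abbrev Letter (G : V → Type*) := (v : V) × G v

/-- One swap of adjacent letters with commuting vertices. -/
def Step (x y : List (Letter G)) : Prop :=
  ∃ (x₁ x₂ : List (Letter G)) (a b : Letter G),
    E a.1 b.1 ∧ x = x₁ ++ a :: b :: x₂ ∧ y = x₁ ++ b :: a :: x₂

variable {E}

lemma step_symm (hsymm : Symmetric E) {x y : List (Letter G)} (h : Step E x y) :
    Step E y x := by
  obtain ⟨x₁, x₂, a, b, hE, rfl, rfl⟩ := h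
  exact ⟨x₁, x₂, b, a, hsymm hE, rfl, rfl⟩

lemma step_cons {x y : List (Letter G)} (p : Letter G) (h : Step E x y) :
    Step E (p :: x) (p :: y) := by
  obtain ⟨x₁, x₂, a, b, hE, rfl, rfl⟩ := h
  exact ⟨p :: x₁, x₂, a, b, hE, rfl, rfl⟩

/-- Reducedness, recursively phrased. -/
def GRed (l : List (Letter G)) : Prop :=
  (∀ p ∈ l, p.2 ≠ 1) ∧ RedR E (l.map Sigma.fst)

lemma gred_iff (l : List (Letter G)) : GReduced E l ↔ GRed (E := E) l := by
  unfold GReduced GRed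
  rw [vred_iff]

lemma gred_step (hsymm : Symmetric E) (hirr : ∀ v, ¬ E v v)
    {x y : List (Letter G)} (h : Step E x y) (hx : GRed (E := E) x) : GRed (E := E) y := by
  obtain ⟨x₁, x₂, a, b, hE, rfl, rfl⟩ := h
  obtain ⟨h1, h2⟩ := hx
  constructor
  · intro p hp
    apply h1
    simp only [List.mem_append, List.mem_cons] at hp ⊢
    tauto
  · simp only [List.map_append, List.map_cons] at h2 ⊢
    exact redR_swap hsymm hirr hE _ _ h2


attribute [local instance] Classical.propDecidable

/-- The letter of vertex `v` that can be shuffled to the front, if any. -/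
noncomputable def front (v : V) : List (Letter G) → Option (G v × List (Letter G))
  | [] => none
  | p :: l => if h : p.1 = v then some (h ▸ p.2, l)
      else if E p.1 v then (front v l).map (fun q => (q.1, p :: q.2)) else none

/-- `cons` on swap-classes of words. -/
def consQ (p : Letter G) : Quot (Step (G := G) E) → Quot (Step (G := G) E) :=
  Quot.map (p :: ·) (fun _ _ h => step_cons p h)

@[simp] lemma consQ_mk (p : Letter G) (l : List (Letter G)) :
    consQ (E := E) p (Quot.mk _ l) = Quot.mk _ (p :: l) := rfl

lemma front_none_iff (hsymm : Symmetric E) (v : V) (l : List (Letter G)) :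
    front (E := E) v l = none ↔ HdR E v (l.map Sigma.fst) := by
  induction l with
  | nil => simp [front, HdR]
  | cons p l ih =>
    by_cases hp : p.1 = v
    · obtain ⟨pv, pg⟩ := p
      dsimp at hp; subst hp
      simp [front, HdR]
    · by_cases hE : E p.1 v
      · simp [front, hp, hE, HdR, Ne.symm hp, hsymm hE, ih]
      · simp only [front, dif_neg hp, if_neg hE, HdR, List.map_cons, true_iff]
        exact ⟨Ne.symm hp, fun hvp => absurd (hsymm hvp) hE⟩

lemma front_sound (v : V) (l : List (Letter G)) (g : G v) (t : List (Letter G))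
    (h : front (E := E) v l = some (g, t)) :
    Quot.mk (Step E) l = Quot.mk (Step E) (⟨v, g⟩ :: t) := by
  induction l generalizing t with
  | nil => simp [front] at h
  | cons p l ih =>
    by_cases hp : p.1 = v
    · obtain ⟨pv, pg⟩ := p
      dsimp at hp; subst hp
      simp [front] at h
      obtain ⟨rfl, rfl⟩ := h
      rfl
    · by_cases hE : E p.1 v
      · simp only [front, dif_neg hp, if_pos hE, Option.map_eq_some_iff] at h
        obtain ⟨⟨g₀, t₀⟩, hf, h2⟩ := h
        injection h2 with h2a h2b
        dsimp at h2a h2b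
        subst h2a; subst h2b
        calc Quot.mk (Step E) (p :: l)
            = Quot.mk (Step E) (p :: ⟨v, g₀⟩ :: t₀) := congrArg (consQ p) (ih t₀ hf)
          _ = Quot.mk (Step E) (⟨v, g₀⟩ :: p :: t₀) :=
              Quot.sound ⟨[], t₀, p, ⟨v, g₀⟩, hE, rfl, rfl⟩
      · simp [front, hp, hE] at h


/-- The "class-valued front" applied to a raw word. -/
noncomputable def frontR (v : V) (l : List (Letter G)) :
    Option (G v × Quot (Step (G := G) E)) :=
  (front (E := E) v l).map (fun q => (q.1, Quot.mk _ q.2))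

lemma frontR_swap (hsymm : Symmetric E) (hirr : ∀ v, ¬ E v v) (v : V)
    {a b : Letter G} (hE : E a.1 b.1) :
    ∀ x₁ x₂, frontR (E := E) v (x₁ ++ a :: b :: x₂) = frontR (E := E) v (x₁ ++ b :: a :: x₂) := by
  have hab : a.1 ≠ b.1 := fun h => hirr _ (h ▸ hE)
  intro x₁
  induction x₁ with
  | nil =>
    intro x₂
    by_cases hav : a.1 = v
    · have hbv : b.1 ≠ v := fun h => hab (hav.trans h.symm)
      have hEbv : E b.1 v := hav ▸ hsymm hE
      simp [frontR, front, hav, hbv, hEbv]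
    · by_cases hbv : b.1 = v
      · have hEav : E a.1 v := hbv ▸ hE
        simp [frontR, front, hav, hbv, hEav]
      · by_cases hEa : E a.1 v
        · by_cases hEb : E b.1 v
          · simp only [List.nil_append, frontR, front, dif_neg hav, dif_neg hbv, if_pos hEa, if_pos hEb,
              Option.map_map]
            cases hF : front (E := E) v x₂ with
            | none => rfl
            | some q =>
              simp only [Option.map_some, Function.comp]
              exact congrArg some (Prod.ext rfl
                (Quot.sound ⟨[], q.2, a, b, hE, rfl, rfl⟩))
          · simp [frontR, front, hav, hbv, hEa, hEb]
        · by_cases hEb : E b.1 v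
          · simp [frontR, front, hav, hbv, hEa, hEb]
          · simp [frontR, front, hav, hbv, hEa, hEb]
  | cons p x₁ ih =>
    intro x₂
    by_cases hp : p.1 = v
    · simp only [List.cons_append, frontR, front, dif_pos hp, Option.map_some]
      exact congrArg some (Prod.ext rfl (Quot.sound ⟨x₁, x₂, a, b, hE, rfl, rfl⟩))
    · by_cases hE' : E p.1 v
      · have key := ih x₂
        simp only [List.cons_append, frontR, front, dif_neg hp, if_pos hE',
          Option.map_map]
        cases hF : front (E := E) v (x₁ ++ a :: b :: x₂) with
        | none =>
          cases hF' : front (E := E) v (x₁ ++ b :: a :: x₂) with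
          | none => rfl
          | some q => simp only [frontR, hF, hF'] at key; simp at key
        | some q =>
          cases hF' : front (E := E) v (x₁ ++ b :: a :: x₂) with
          | none => simp only [frontR, hF, hF'] at key; simp at key
          | some q' =>
            simp only [frontR, hF, hF', Option.map_some] at key
            injection key with key
            injection key with h1 h2
            simp only [Option.map_some, Function.comp]
            exact congrArg some (Prod.ext h1 (congrArg (consQ p) h2))
      · simp [frontR, front, hp, hE']


section QLevel

variable (hsymm : Symmetric E) (hirr : ∀ v, ¬ E v v)

/-- Classes of words under swaps. -/
noncomputable def frontQ (v : V) :
    Quot (Step (G := G) E) → Option (G v × Quot (Step (G := G) E)) :=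
  Quot.lift (frontR (E := E) v) (fun x y h => by
    obtain ⟨x₁, x₂, a, b, hE, rfl, rfl⟩ := h
    exact frontR_swap hsymm hirr v hE x₁ x₂)

noncomputable def redQ : Quot (Step (G := G) E) → Prop :=
  Quot.lift (GRed (E := E)) (fun x y h => propext
    ⟨fun hx => gred_step hsymm hirr h hx,
     fun hy => gred_step hsymm hirr (step_symm hsymm h) hy⟩)

@[simp] lemma frontQ_mk (v : V) (l : List (Letter G)) :
    frontQ (E := E) hsymm hirr v (Quot.mk _ l) = frontR (E := E) v l := rfl

@[simp] lemma redQ_mk (l : List (Letter G)) :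
    redQ (E := E) hsymm hirr (Quot.mk _ l) = GRed (E := E) l := rfl

lemma frontQ_cons_self (v : V) (g : G v) (q : Quot (Step (G := G) E)) :
    frontQ (E := E) hsymm hirr v (consQ ⟨v, g⟩ q) = some (g, q) := by
  induction q using Quot.ind with
  | _ l => simp [frontR, front]

lemma frontQ_cons_ne {v : V} {p : Letter G} (hp : p.1 ≠ v) (q : Quot (Step (G := G) E)) :
    frontQ (E := E) hsymm hirr v (consQ p q) =
      if E p.1 v then (frontQ (E := E) hsymm hirr v q).map (fun r => (r.1, consQ p r.2))
      else none := by
  induction q using Quot.ind with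
  | _ l =>
    by_cases hE : E p.1 v
    · cases hF : front (E := E) v l with
      | none => simp [frontR, front, hp, hE, hF]
      | some r => simp [frontR, front, hp, hE, hF]
    · simp [frontR, front, hp, hE]

lemma frontQ_sound {v : V} {g : G v} {q t : Quot (Step (G := G) E)}
    (h : frontQ (E := E) hsymm hirr v q = some (g, t)) : q = consQ ⟨v, g⟩ t := by
  induction q using Quot.ind with
  | _ l =>
    simp only [frontQ_mk, frontR, Option.map_eq_some_iff] at h
    obtain ⟨⟨g₀, t₀⟩, hf, h2⟩ := h
    injection h2 with h2a h2b
    dsimp at h2a h2b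
    subst h2a; subst h2b
    exact front_sound v l g₀ t₀ hf

lemma redQ_consQ {v : V} {g : G v} (q : Quot (Step (G := G) E)) :
    redQ (E := E) hsymm hirr (consQ ⟨v, g⟩ q) ↔
      g ≠ 1 ∧ redQ (E := E) hsymm hirr q ∧ frontQ (E := E) hsymm hirr v q = none := by
  induction q using Quot.ind with
  | _ l =>
    have hfr : frontR (E := E) v l = none ↔ front (E := E) v l = none := by
      simp [frontR]
    simp only [consQ_mk, redQ_mk, frontQ_mk, GRed, List.forall_mem_cons, List.map_cons, RedR,
      hfr, front_none_iff hsymm]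
    tauto

lemma redQ_nil : redQ (E := E) hsymm hirr (Quot.mk _ ([] : List (Letter G))) := by
  simp only [redQ_mk]
  exact ⟨by simp, trivial⟩

/-- The action of a vertex-group element on classes of words. -/
noncomputable def actQ (v : V) (g : G v) (q : Quot (Step (G := G) E)) :
    Quot (Step (G := G) E) :=
  (frontQ (E := E) hsymm hirr v q).elim (if g = 1 then q else consQ ⟨v, g⟩ q)
    (fun r => if g * r.1 = 1 then r.2 else consQ ⟨v, g * r.1⟩ r.2)


lemma consQ_swap {a b : Letter G} (hE : E a.1 b.1) (q : Quot (Step (G := G) E)) :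
    consQ a (consQ b q) = consQ b (consQ a q) := by
  induction q using Quot.ind with
  | _ l => exact Quot.sound ⟨[], l, a, b, hE, rfl, rfl⟩

lemma actQ_none {v : V} {g : G v} {q : Quot (Step (G := G) E)}
    (hf : frontQ (E := E) hsymm hirr v q = none) :
    actQ (E := E) hsymm hirr v g q = if g = 1 then q else consQ ⟨v, g⟩ q := by
  simp [actQ, hf]

lemma actQ_some {v : V} {g h : G v} {q t : Quot (Step (G := G) E)}
    (hf : frontQ (E := E) hsymm hirr v q = some (h, t)) :
    actQ (E := E) hsymm hirr v g q = if g * h = 1 then t else consQ ⟨v, g * h⟩ t := by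
  simp [actQ, hf]

lemma redQ_some {v : V} {g : G v} {q t : Quot (Step (G := G) E)}
    (hq : redQ (E := E) hsymm hirr q)
    (hf : frontQ (E := E) hsymm hirr v q = some (g, t)) :
    g ≠ 1 ∧ redQ (E := E) hsymm hirr t ∧ frontQ (E := E) hsymm hirr v t = none := by
  have h := frontQ_sound hsymm hirr hf
  rw [h] at hq
  exact (redQ_consQ hsymm hirr t).mp hq

lemma red_actQ {v : V} {g : G v} {q : Quot (Step (G := G) E)}
    (hq : redQ (E := E) hsymm hirr q) :
    redQ (E := E) hsymm hirr (actQ (E := E) hsymm hirr v g q) := by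
  cases hf : frontQ (E := E) hsymm hirr v q with
  | none =>
    rw [actQ_none hsymm hirr hf]
    by_cases hg : g = 1
    · simpa [hg]
    · rw [if_neg hg]
      exact (redQ_consQ hsymm hirr q).mpr ⟨hg, hq, hf⟩
  | some r =>
    obtain ⟨h, t⟩ := r
    obtain ⟨hne, ht, hft⟩ := redQ_some hsymm hirr hq hf
    rw [actQ_some hsymm hirr hf]
    by_cases hg : g * h = 1
    · simpa [hg]
    · rw [if_neg hg]
      exact (redQ_consQ hsymm hirr t).mpr ⟨hg, ht, hft⟩

lemma actQ_one {v : V} {q : Quot (Step (G := G) E)}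
    (hq : redQ (E := E) hsymm hirr q) :
    actQ (E := E) hsymm hirr v 1 q = q := by
  cases hf : frontQ (E := E) hsymm hirr v q with
  | none => simp [actQ_none hsymm hirr hf]
  | some r =>
    obtain ⟨h, t⟩ := r
    obtain ⟨hne, ht, hft⟩ := redQ_some hsymm hirr hq hf
    rw [actQ_some hsymm hirr hf, one_mul, if_neg hne]
    exact (frontQ_sound hsymm hirr hf).symm

lemma actQ_mul {v : V} (g g' : G v) {q : Quot (Step (G := G) E)}
    (hq : redQ (E := E) hsymm hirr q) :
    actQ (E := E) hsymm hirr v g (actQ (E := E) hsymm hirr v g' q) =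
      actQ (E := E) hsymm hirr v (g * g') q := by
  cases hf : frontQ (E := E) hsymm hirr v q with
  | none =>
    by_cases h1 : g' = 1
    · rw [actQ_none hsymm hirr hf, if_pos h1, h1, mul_one, actQ_none hsymm hirr hf]
    · rw [actQ_none hsymm hirr hf, if_neg h1,
        actQ_some hsymm hirr (frontQ_cons_self hsymm hirr v g' q),
        actQ_none hsymm hirr hf]
  | some r =>
    obtain ⟨h, t⟩ := r
    obtain ⟨hne, ht, hft⟩ := redQ_some hsymm hirr hq hf
    rw [actQ_some hsymm hirr (g := g') hf]
    by_cases h1 : g' * h = 1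
    · rw [if_pos h1, actQ_none hsymm hirr hft, actQ_some hsymm hirr hf]
      have hgh : g * g' * h = g := by rw [mul_assoc, h1, mul_one]
      rw [hgh]
    · rw [if_neg h1, actQ_some hsymm hirr (frontQ_cons_self hsymm hirr v (g' * h) t),
        actQ_some hsymm hirr hf, ← mul_assoc]

lemma actQ_comm_aux {v w : V} (hE : E v w) (g : G v) (k : G w)
    {q : Quot (Step (G := G) E)} (hq : redQ (E := E) hsymm hirr q)
    (hw : frontQ (E := E) hsymm hirr w q = none) :
    actQ (E := E) hsymm hirr v g (actQ (E := E) hsymm hirr w k q) =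
      actQ (E := E) hsymm hirr w k (actQ (E := E) hsymm hirr v g q) := by
  have hvw : v ≠ w := fun h => hirr v (h ▸ hE)
  have hEwv : E w v := hsymm hE
  by_cases hk : k = 1
  · rw [actQ_none hsymm hirr hw, if_pos hk, hk, actQ_one hsymm hirr (red_actQ hsymm hirr hq)]
  · rw [actQ_none hsymm hirr hw, if_neg hk]
    have hfcons : frontQ (E := E) hsymm hirr v (consQ ⟨w, k⟩ q) =
        (frontQ (E := E) hsymm hirr v q).map (fun r => (r.1, consQ ⟨w, k⟩ r.2)) := by
      rw [frontQ_cons_ne hsymm hirr hvw.symm, if_pos hEwv]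
    cases hv : frontQ (E := E) hsymm hirr v q with
    | none =>
      rw [hv] at hfcons
      rw [actQ_none hsymm hirr hfcons, actQ_none hsymm hirr hv]
      by_cases hg : g = 1
      · rw [if_pos hg, if_pos hg, actQ_none hsymm hirr hw, if_neg hk]
      · rw [if_neg hg, if_neg hg]
        have hfw : frontQ (E := E) hsymm hirr w (consQ ⟨v, g⟩ q) = none := by
          rw [frontQ_cons_ne hsymm hirr hvw, if_pos hE, hw]; rfl
        rw [actQ_none hsymm hirr hfw, if_neg hk]
        exact consQ_swap hE q
    | some r =>
      obtain ⟨g₀, t⟩ := r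
      have hqe := frontQ_sound hsymm hirr hv
      have hwt : frontQ (E := E) hsymm hirr w t = none := by
        rw [hqe, frontQ_cons_ne hsymm hirr hvw, if_pos hE] at hw
        cases hwt : frontQ (E := E) hsymm hirr w t with
        | none => rfl
        | some r => rw [hwt] at hw; simp at hw
      rw [hv] at hfcons
      rw [actQ_some hsymm hirr hfcons, actQ_some hsymm hirr hv]
      by_cases hg : g * g₀ = 1
      · rw [if_pos hg, if_pos hg, actQ_none hsymm hirr hwt, if_neg hk]
      · rw [if_neg hg, if_neg hg]
        have hfw : frontQ (E := E) hsymm hirr w (consQ ⟨v, g * g₀⟩ t) = none := by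
          rw [frontQ_cons_ne hsymm hirr hvw, if_pos hE, hwt]; rfl
        rw [actQ_none hsymm hirr hfw, if_neg hk]
        exact consQ_swap (a := ⟨v, g * g₀⟩) (b := ⟨w, k⟩) hE t


lemma actQ_comm {v w : V} (hE : E v w) (g : G v) (k : G w)
    {q : Quot (Step (G := G) E)} (hq : redQ (E := E) hsymm hirr q) :
    actQ (E := E) hsymm hirr v g (actQ (E := E) hsymm hirr w k q) =
      actQ (E := E) hsymm hirr w k (actQ (E := E) hsymm hirr v g q) := by
  have hvw : v ≠ w := fun h => hirr v (h ▸ hE)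
  have hEwv : E w v := hsymm hE
  cases hw : frontQ (E := E) hsymm hirr w q with
  | none => exact actQ_comm_aux hsymm hirr hE g k hq hw
  | some r =>
    obtain ⟨k₀, s⟩ := r
    cases hv : frontQ (E := E) hsymm hirr v q with
    | none => exact (actQ_comm_aux hsymm hirr hEwv k g hq hv).symm
    | some r' =>
      obtain ⟨g₀, t⟩ := r'
      have hqe := frontQ_sound hsymm hirr hv
      obtain ⟨hg₀, ht, hvt⟩ := redQ_some hsymm hirr hq hv
      -- identify the w-front inside t
      have hwq : frontQ (E := E) hsymm hirr w q =
          (frontQ (E := E) hsymm hirr w t).map (fun r => (r.1, consQ ⟨v, g₀⟩ r.2)) := by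
        rw [hqe, frontQ_cons_ne hsymm hirr hvw, if_pos hE]
      rw [hw] at hwq
      cases hwt : frontQ (E := E) hsymm hirr w t with
      | none => rw [hwt] at hwq; simp at hwq
      | some r'' =>
      obtain ⟨k₁, s'⟩ := r''
      rw [hwt] at hwq
      simp only [Option.map_some] at hwq
      injection hwq with hwq
      injection hwq with hwq1 hwq2
      subst hwq1
      obtain ⟨hk₀, hs', hws'⟩ := redQ_some hsymm hirr ht hwt
      have hte := frontQ_sound hsymm hirr hwt
      have hvs' : frontQ (E := E) hsymm hirr v s' = none := by
        rw [hte, frontQ_cons_ne hsymm hirr hvw.symm, if_pos hEwv] at hvt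
        cases hvs' : frontQ (E := E) hsymm hirr v s' with
        | none => rfl
        | some r => rw [hvs'] at hvt; simp at hvt
      -- now q = consQ ⟨v,g₀⟩ (consQ ⟨w,k₀⟩ s')
      rw [actQ_some hsymm hirr hw, actQ_some hsymm hirr hv]
      by_cases hkk : k * k₀ = 1
      · rw [if_pos hkk]
        by_cases hgg : g * g₀ = 1
        · rw [if_pos hgg, hwq2, actQ_some hsymm hirr (frontQ_cons_self hsymm hirr v g₀ s'),
            if_pos hgg, hte, actQ_some hsymm hirr (frontQ_cons_self hsymm hirr w k₀ s'),
            if_pos hkk]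
        · rw [if_neg hgg, hwq2, actQ_some hsymm hirr (frontQ_cons_self hsymm hirr v g₀ s')]
          rw [hte]
          have hf1 : frontQ (E := E) hsymm hirr w (consQ ⟨v, g * g₀⟩ (consQ ⟨w, k₀⟩ s')) =
              some (k₀, consQ ⟨v, g * g₀⟩ s') := by
            rw [frontQ_cons_ne hsymm hirr hvw, if_pos hE,
              frontQ_cons_self hsymm hirr w k₀ s']
            rfl
          rw [actQ_some hsymm hirr hf1, if_pos hkk, if_neg hgg]
      · rw [if_neg hkk]
        have hf2 : frontQ (E := E) hsymm hirr v (consQ ⟨w, k * k₀⟩ s) =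
            some (g₀, consQ ⟨w, k * k₀⟩ s') := by
          rw [hwq2, frontQ_cons_ne hsymm hirr hvw.symm, if_pos hEwv,
            frontQ_cons_self hsymm hirr v g₀ s']
          rfl
        rw [actQ_some hsymm hirr hf2]
        by_cases hgg : g * g₀ = 1
        · rw [if_pos hgg, if_pos hgg, hte,
            actQ_some hsymm hirr (frontQ_cons_self hsymm hirr w k₀ s'), if_neg hkk]
        · rw [if_neg hgg, if_neg hgg]
          have hf3 : frontQ (E := E) hsymm hirr w (consQ ⟨v, g * g₀⟩ t) =
              some (k₀, consQ ⟨v, g * g₀⟩ s') := by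
            rw [hte, frontQ_cons_ne hsymm hirr hvw, if_pos hE,
              frontQ_cons_self hsymm hirr w k₀ s']
            rfl
          rw [actQ_some hsymm hirr hf3, if_neg hkk]
          exact consQ_swap (a := ⟨v, g * g₀⟩) (b := ⟨w, k * k₀⟩) hE s'


/-- The vertex-group actions on reduced classes. -/
noncomputable def phi (v : V) :
    G v →* Equiv.Perm {q : Quot (Step (G := G) E) // redQ (E := E) hsymm hirr q} where
  toFun g :=
    { toFun := fun q => ⟨actQ (E := E) hsymm hirr v g q.1, red_actQ hsymm hirr q.2⟩
      invFun := fun q => ⟨actQ (E := E) hsymm hirr v g⁻¹ q.1, red_actQ hsymm hirr q.2⟩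
      left_inv := fun q => Subtype.ext (by
        dsimp only
        rw [actQ_mul hsymm hirr _ _ q.2, inv_mul_cancel]
        exact actQ_one hsymm hirr q.2)
      right_inv := fun q => Subtype.ext (by
        dsimp only
        rw [actQ_mul hsymm hirr _ _ q.2, mul_inv_cancel]
        exact actQ_one hsymm hirr q.2) }
  map_one' := Equiv.ext fun q => Subtype.ext (actQ_one hsymm hirr q.2)
  map_mul' := fun g g' => Equiv.ext fun q => Subtype.ext (actQ_mul hsymm hirr g g' q.2).symm

/-- The action of the free product. -/
noncomputable def phiF : Monoid.CoprodI G →* Equiv.Perm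
    {q : Quot (Step (G := G) E) // redQ (E := E) hsymm hirr q} :=
  Monoid.CoprodI.lift (phi (E := E) hsymm hirr)

lemma phiF_rels {x : Monoid.CoprodI G} (hx : x ∈ graphRels E G) :
    phiF (E := E) hsymm hirr x = 1 := by
  obtain ⟨v, w, hE, g, k, rfl⟩ := hx
  have hcomm : phi (E := E) hsymm hirr v g * phi (E := E) hsymm hirr w k =
      phi (E := E) hsymm hirr w k * phi (E := E) hsymm hirr v g := by
    apply Equiv.ext
    intro q
    exact Subtype.ext (actQ_comm hsymm hirr hE g k q.2)
  simp only [map_mul, map_inv, phiF, Monoid.CoprodI.lift_of]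
  rw [hcomm]
  group

/-- The action of the graph product. -/
noncomputable def phiG : GraphProduct E G →* Equiv.Perm
    {q : Quot (Step (G := G) E) // redQ (E := E) hsymm hirr q} :=
  QuotientGroup.lift _ (phiF (E := E) hsymm hirr) (fun x hx =>
    MonoidHom.mem_ker.mp (Subgroup.normalClosure_le_normal
      (fun y hy => MonoidHom.mem_ker.mpr (phiF_rels hsymm hirr hy)) hx))

lemma phiG_of (v : V) (g : G v) :
    phiG (E := E) hsymm hirr (GraphProduct.of E g) = phi (E := E) hsymm hirr v g := by
  have : phiG (E := E) hsymm hirr (GraphProduct.of E g) =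
      phiF (E := E) hsymm hirr (Monoid.CoprodI.of g) := rfl
  rw [this, phiF, Monoid.CoprodI.lift_of]

lemma wordProd_nil : wordProd E ([] : List (Letter G)) = 1 := rfl

lemma wordProd_cons (p : Letter G) (l : List (Letter G)) :
    wordProd E (p :: l) = GraphProduct.of E p.2 * wordProd E l := by
  simp [wordProd]

lemma key_orbit (l : List (Letter G)) (hred : GRed (E := E) l) :
    phiG (E := E) hsymm hirr (wordProd E l) ⟨Quot.mk _ [], redQ_nil hsymm hirr⟩ =
      ⟨Quot.mk _ l, by rw [redQ_mk]; exact hred⟩ := by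
  induction l with
  | nil => rw [wordProd_nil, map_one]; rfl
  | cons p l ih =>
    have hred' : redQ (E := E) hsymm hirr (consQ p (Quot.mk _ l)) := by
      rwa [consQ_mk, redQ_mk]
    obtain ⟨hp1, hl, hfl⟩ := (redQ_consQ (E := E) hsymm hirr (v := p.1) (g := p.2)
      (Quot.mk _ l)).mp hred'
    rw [wordProd_cons, map_mul, Equiv.Perm.mul_apply, ih (by rwa [redQ_mk] at hl),
      phiG_of]
    apply Subtype.ext
    show actQ (E := E) hsymm hirr p.1 p.2 (Quot.mk _ l) = Quot.mk _ (p :: l)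
    rw [actQ_none hsymm hirr hfl, if_neg hp1]
    rfl

include hsymm hirr in
lemma same_class (l₁ l₂ : List (Letter G)) (h₁ : GRed (E := E) l₁) (h₂ : GRed (E := E) l₂)
    (heq : wordProd E l₁ = wordProd E l₂) :
    Quot.mk (Step (G := G) E) l₁ = Quot.mk (Step (G := G) E) l₂ := by
  have k₁ := key_orbit hsymm hirr l₁ h₁
  have k₂ := key_orbit hsymm hirr l₂ h₂
  rw [heq, k₂] at k₁
  exact congrArg Subtype.val k₁.symm


include hsymm in
lemma of_comm {v w : V} (hE : E v w) (g : G v) (k : G w) :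
    GraphProduct.of E g * GraphProduct.of E k = GraphProduct.of E k * GraphProduct.of E g := by
  show (QuotientGroup.mk (Monoid.CoprodI.of g * Monoid.CoprodI.of k) : GraphProduct E G) =
    QuotientGroup.mk (Monoid.CoprodI.of k * Monoid.CoprodI.of g)
  rw [QuotientGroup.eq]
  apply Subgroup.subset_normalClosure
  refine ⟨w, v, hsymm hE, k⁻¹, g⁻¹, ?_⟩
  simp only [map_inv, inv_inv, mul_inv_rev]
  group

lemma of_inv {v : V} (g : G v) :
    GraphProduct.of E (g⁻¹) = (GraphProduct.of E g)⁻¹ := by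
  unfold GraphProduct.of
  rw [map_inv]
  rfl

include hsymm in
lemma wordProd_swap {a b : Letter G} (hE : E a.1 b.1) (x₁ x₂ : List (Letter G)) :
    wordProd E (x₁ ++ a :: b :: x₂) = wordProd E (x₁ ++ b :: a :: x₂) := by
  induction x₁ with
  | nil =>
    rw [List.nil_append, List.nil_append, wordProd_cons, wordProd_cons, wordProd_cons,
      wordProd_cons, ← mul_assoc, ← mul_assoc, of_comm hsymm hE]
  | cons p x₁ ih =>
    rw [List.cons_append, List.cons_append, wordProd_cons, wordProd_cons, ih]

section Algebra

variable {A : Type*} [CStarAlgebra A]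
variable (α : GraphProduct E G →* (A ≃ₐ[ℂ] A)) (αv : ∀ v, G v →* (A ≃ₐ[ℂ] A))
variable (hv : ∀ v, G v → A)

include hsymm in
lemma hWord_swap (hα : ∀ (v : V) (g : G v), α (GraphProduct.of E g) = αv v g)
    (hcen : ∀ (v : V) (s : G v), hv v s ∈ Set.center A)
    (hmcomm : ∀ v w, E v w → ∀ (g : G v) (b : G w), αv v g (hv w b) = hv w b)
    {x y : List (Letter G)} (h : Step E x y) :
    hWord E α hv x = hWord E α hv y := by
  obtain ⟨x₁, x₂, a, b, hE, rfl, rfl⟩ := h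
  induction x₁ with
  | cons p x₁ ih =>
    simp only [List.cons_append, hWord, List.append_eq]
    rw [ih, wordProd_swap hsymm hE]
  | nil =>
    simp only [List.nil_append, hWord]
    have key : ∀ (c d : Letter G), E c.1 d.1 →
        α ((wordProd E (d :: x₂))⁻¹) (hv c.1 c.2) =
          α ((wordProd E x₂)⁻¹) (hv c.1 c.2) := by
      intro c d hcd
      rw [wordProd_cons, mul_inv_rev, map_mul, AlgEquiv.mul_apply, ← of_inv, hα,
        hmcomm d.1 c.1 (hsymm hcd)]
    rw [key a b hE, key b a (hsymm hE)]
    rw [← mul_assoc, ← mul_assoc, ← map_mul, ← map_mul]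
    congr 2
    exact (Set.mem_center_iff.mp (hcen a.1 a.2)).comm (hv b.1 b.2)

end Algebra
end QLevel
end Letters
end GPAux

/-- Well-definedness of the graph product multiplier: its value on a reduced word
depends only on the group element the word represents. -/
theorem stmt9
    {V : Type*} (E : V → V → Prop) {G : V → Type*} [∀ v, Group (G v)]
    {A : Type*} [CStarAlgebra A]
    -- `Γ` is a simplicial graph
    (hsymm : Symmetric E) (hirr : ∀ v, ¬ E v v)
    -- the vertex actions and the graph product action
    (αv : ∀ v, G v →* (A ≃ₐ[ℂ] A))
    (α : GraphProduct E G →* (A ≃ₐ[ℂ] A))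
    (hα : ∀ (v : V) (g : G v), α (GraphProduct.of E g) = αv v g)
    (hstar : ∀ (s : GraphProduct E G) (a : A), α s (star a) = star (α s a))
    -- the actions commute according to `Γ`
    (hacomm : ∀ v w, E v w → ∀ (g : G v) (k : G w) (a : A),
      αv v g (αv w k a) = αv w k (αv v g a))
    -- the vertex multipliers: unital positive definite, commuting according to `Γ`
    (hv : ∀ v, G v → A)
    (hpd : ∀ v, IsPDMultiplier (αv v) (hv v))
    (huni : ∀ v, hv v 1 = 1)
    (hmcomm : ∀ v w, E v w → ∀ (g : G v) (b : G w), αv v g (hv w b) = hv w b)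
    (l₁ l₂ : List (Σ v, G v)) (h₁ : GReduced E l₁) (h₂ : GReduced E l₂)
    (heq : wordProd E l₁ = wordProd E l₂) :
    hWord E α hv l₁ = hWord E α hv l₂ := by
  have hcen : ∀ (v : V) (s : G v), hv v s ∈ Set.center A := fun v s => (hpd v).1 s
  have hg₁ := (GPAux.gred_iff (E := E) l₁).mp h₁
  have hg₂ := (GPAux.gred_iff (E := E) l₂).mp h₂
  have hclass := GPAux.same_class hsymm hirr l₁ l₂ hg₁ hg₂ heq
  exact congrArg (Quot.lift (hWord E α hv)
    (fun x y h => GPAux.hWord_swap (E := E) hsymm α αv hv hα hcen hmcomm h)) hclass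
end

section
/- Define the kernel K : ⋆_Γ G_v × ⋆_Γ G_v → Z(A) by K(x,y) = α_y(h(x⁻¹y)) where h = ⋆_Γ h_v. If x = x₁⋯xₘ and y = y₁⋯yₙ are reduced words such that x⁻¹y is reduced (the concatenation xₘ⁻¹⋯x₁⁻¹y₁⋯yₙ is a reduced word), then K(x,y) = K(x, x₁⋯x_{m−1}) · K(x₁⋯x_{m−1}, y). -/
open scoped Matrix

section Aux

variable {V : Type*} (E : V → V → Prop) {G : V → Type*} [∀ v, Group (G v)]

lemma myOf_inv {v : V} (g : G v) :
    GraphProduct.of E g⁻¹ = (GraphProduct.of E g)⁻¹ := by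
  simp [GraphProduct.of]
  rfl

lemma myWordProd_nil : wordProd E ([] : List (Σ v, G v)) = 1 := rfl

lemma myWordProd_cons (p : Σ v, G v) (l : List (Σ v, G v)) :
    wordProd E (p :: l) = GraphProduct.of E p.2 * wordProd E l := by
  simp [wordProd]

lemma myWordProd_append (l₁ l₂ : List (Σ v, G v)) :
    wordProd E (l₁ ++ l₂) = wordProd E l₁ * wordProd E l₂ := by
  simp [wordProd]

lemma myWordProd_rev_inv (l : List (Σ v, G v)) :
    wordProd E (l.reverse.map fun p => (⟨p.1, p.2⁻¹⟩ : Σ v, G v)) = (wordProd E l)⁻¹ := by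
  induction l with
  | nil => simp [wordProd]
  | cons p l ih =>
    rw [List.reverse_cons, List.map_append, myWordProd_append, ih]
    simp [myWordProd_cons, myWordProd_nil, myOf_inv, mul_inv_rev]

lemma myVReduced_tail (a : V) (l : List V) (h : VReduced E (a :: l)) : VReduced E l := by
  intro k m hkm heq
  have hk : (k : ℕ) + 1 < (a :: l).length := by simp
  have hm : (m : ℕ) + 1 < (a :: l).length := by simp
  have hget : ∀ (i : ℕ) (hi : i < l.length) (hi' : i + 1 < (a :: l).length),
      (a :: l).get ⟨i + 1, hi'⟩ = l.get ⟨i, hi⟩ := by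
    intro i hi hi'
    simp
  obtain ⟨p, hp1, hp2, hp3⟩ := h ⟨(k : ℕ) + 1, hk⟩ ⟨(m : ℕ) + 1, hm⟩ (by simpa)
    (by rw [hget _ k.isLt, hget _ m.isLt]; simpa using heq)
  have hp1' : (k : ℕ) + 1 < (p : ℕ) := by simpa using hp1
  have hp2' : (p : ℕ) < (m : ℕ) + 1 := by simpa using hp2
  have hplt : (p : ℕ) - 1 < l.length := by
    have := p.isLt; simp at this; omega
  refine ⟨⟨(p : ℕ) - 1, hplt⟩, ?_, ?_, ?_⟩
  · show (k : ℕ) < (p : ℕ) - 1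
    omega
  · show (p : ℕ) - 1 < (m : ℕ)
    omega
  have hgp : (a :: l).get p = l.get ⟨(p : ℕ) - 1, hplt⟩ := by
    have hp0 : 0 < (p : ℕ) := by omega
    rcases p with ⟨pv, hpv⟩
    have hp0' : 0 < pv := hp0
    obtain ⟨q, rfl⟩ : ∃ q, pv = q + 1 := ⟨pv - 1, by omega⟩
    simp
  rw [← hgp, ← hget _ k.isLt hk]
  exact hp3

lemma myGReduced_tail (p : Σ v, G v) (l : List (Σ v, G v))
    (h : GReduced E (p :: l)) : GReduced E l := by
  obtain ⟨h1, h2⟩ := h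
  exact ⟨fun q hq => h1 q (List.mem_cons_of_mem _ hq), myVReduced_tail E _ _ h2⟩

lemma myGReduced_singleton (p : Σ v, G v) (hp : p.2 ≠ 1) : GReduced E [p] := by
  refine ⟨by simpa using hp, ?_⟩
  intro k m hkm _
  exfalso
  have hk := k.isLt
  have hm := m.isLt
  simp only [List.length_map, List.length_cons, List.length_nil] at hk hm
  omega

end Aux

/-- If `x = x₁⋯xₘ`, `y = y₁⋯yₙ` are reduced and `x⁻¹y` is reduced (the
concatenation `xₘ⁻¹⋯x₁⁻¹y₁⋯yₙ` is a reduced word), then the kernel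
`K(x,y) = α_y(h(x⁻¹y))` satisfies `K(x,y) = K(x, x₁⋯x_{m-1}) K(x₁⋯x_{m-1}, y)`. -/
theorem stmt11
    {V : Type*} (E : V → V → Prop) {G : V → Type*} [∀ v, Group (G v)]
    {A : Type*} [CStarAlgebra A]
    -- `Γ` is a simplicial graph
    (hsymm : Symmetric E) (hirr : ∀ v, ¬ E v v)
    -- the vertex actions and the graph product action
    (αv : ∀ v, G v →* (A ≃ₐ[ℂ] A))
    (α : GraphProduct E G →* (A ≃ₐ[ℂ] A))
    (hα : ∀ (v : V) (g : G v), α (GraphProduct.of E g) = αv v g)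
    (hstar : ∀ (s : GraphProduct E G) (a : A), α s (star a) = star (α s a))
    -- the actions commute according to `Γ`
    (hacomm : ∀ v w, E v w → ∀ (g : G v) (k : G w) (a : A),
      αv v g (αv w k a) = αv w k (αv v g a))
    -- the vertex multipliers: unital positive definite, commuting according to `Γ`
    (hv : ∀ v, G v → A)
    (hpd : ∀ v, IsPDMultiplier (αv v) (hv v))
    (huni : ∀ v, hv v 1 = 1)
    (hmcomm : ∀ v w, E v w → ∀ (g : G v) (b : G w), αv v g (hv w b) = hv w b)
    -- `h` is the graph product multiplier `⋆_Γ h_v`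
    (h : GraphProduct E G → A)
    (hred : ∀ l : List (Σ v, G v), GReduced E l → h (wordProd E l) = hWord E α hv l)
    -- the associated kernel
    (K : GraphProduct E G → GraphProduct E G → A)
    (hK : ∀ x y : GraphProduct E G, K x y = α y (h (x⁻¹ * y)))
    (lx ly : List (Σ v, G v)) (hlx : GReduced E lx) (hly : GReduced E ly)
    (hlxne : lx ≠ [])
    (hxy : GReduced E ((lx.reverse.map fun p => (⟨p.1, p.2⁻¹⟩ : Σ v, G v)) ++ ly)) :
    K (wordProd E lx) (wordProd E ly) =
      K (wordProd E lx) (wordProd E lx.dropLast) *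
        K (wordProd E lx.dropLast) (wordProd E ly) := by
  classical
  obtain ⟨l', p, rfl⟩ : ∃ l' p, lx = l' ++ [p] :=
    ⟨lx.dropLast, lx.getLast hlxne, (List.dropLast_append_getLast hlxne).symm⟩
  have hdrop : (l' ++ [p]).dropLast = l' := List.dropLast_concat ..
  rw [hdrop]
  set f : (Σ v, G v) → (Σ v, G v) := fun q => ⟨q.1, q.2⁻¹⟩ with hf
  set x' : GraphProduct E G := wordProd E l' with hx'
  set y : GraphProduct E G := wordProd E ly with hy
  set x : GraphProduct E G := wordProd E (l' ++ [p]) with hx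
  set L' : List (Σ v, G v) := (l'.reverse.map f) ++ ly with hL'
  have hsplit : ((l' ++ [p]).reverse.map f) ++ ly = f p :: L' := by
    simp [hL']
  have hxyL : GReduced E (f p :: L') := by rw [← hsplit]; exact hxy
  have hL'red : GReduced E L' := myGReduced_tail E _ _ hxyL
  have hwL' : wordProd E L' = x'⁻¹ * y := by
    rw [hL', myWordProd_append, myWordProd_rev_inv]
  have hxval : x = x' * GraphProduct.of E p.2 := by
    rw [hx, myWordProd_append, myWordProd_cons, myWordProd_nil, mul_one]
  have hpne : p.2 ≠ 1 := hlx.1 p (by simp)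
  have hKxx' : K x x' = α x' (hv p.1 p.2⁻¹) := by
    rw [hK]
    have h1 : x⁻¹ * x' = wordProd E [f p] := by
      rw [myWordProd_cons, myWordProd_nil, mul_one, hxval, hf]
      simp [myOf_inv E p.2, mul_assoc]
    rw [h1, hred _ (myGReduced_singleton E (f p) (fun h' => hpne ((inv_eq_one (a := p.2)).mp h')))]
    simp [hWord, hf, myWordProd_nil]
    rfl
  have hKx'y : K x' y = α y (hWord E α hv L') := by
    rw [hK, ← hwL', hred _ hL'red]
  rw [hK]
  have hxy' : x⁻¹ * y = wordProd E (f p :: L') := by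
    rw [← hsplit, myWordProd_append, myWordProd_rev_inv]
  rw [hxy', hred _ hxyL]
  have : hWord E α hv (f p :: L') =
      α ((wordProd E L')⁻¹) (hv p.1 p.2⁻¹) * hWord E α hv L' := rfl
  rw [this, map_mul, hKxx', hKx'y]
  congr 1
  rw [hwL']
  simp only [mul_inv_rev, inv_inv]
  rw [← AlgEquiv.mul_apply, ← map_mul]
  congr 2
  group
end

section
/- Schwarz inequality for kernels: let X be a finite complete set on which the kernel K satisfies Σ_{x,y∈X} ⟨K(x,y)ξ(y)|ξ(x)⟩ ≥ 0 for all ξ : X → H, with K(x,x) = 1. Suppose c_i, b_i, c_i b_i ∈ X for 1 ≤ i ≤ N and K(c_i b_i, c_j) = K(c_i b_i, c_i)K(c_i, c_j) for all i,j. Then the matrix inequality [K(c_i b_i, c_j b_j)]_{ij} ≥ [K(c_i b_i, c_i)K(c_i, c_j)K(c_j, c_j b_j)]_{ij} holds in M_N(B(H)). -/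
open scoped InnerProductSpace ComplexOrder Matrix

set_option synthInstance.maxHeartbeats 1000000
set_option maxHeartbeats 1000000
set_option linter.unusedSectionVars false

namespace Stmt14Aux

noncomputable section

variable {H : Type*} [NormedAddCommGroup H] [InnerProductSpace ℂ H] [CompleteSpace H] {N : ℕ}

instance : CompleteSpace (PiLp 2 fun _ : Fin N => H) := by
  infer_instance

/-- The operator on `H^N` associated to a matrix of operators. -/
def phi (M : Matrix (Fin N) (Fin N) (H →L[ℂ] H)) :
    (PiLp 2 fun _ : Fin N => H) →L[ℂ] (PiLp 2 fun _ : Fin N => H) :=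
  (PiLp.continuousLinearEquiv 2 ℂ (fun _ : Fin N => H)).symm.toContinuousLinearMap ∘L
    (ContinuousLinearMap.pi fun i => ∑ j, (M i j) ∘L ContinuousLinearMap.proj j) ∘L
    (PiLp.continuousLinearEquiv 2 ℂ (fun _ : Fin N => H)).toContinuousLinearMap

lemma phi_apply (M : Matrix (Fin N) (Fin N) (H →L[ℂ] H))
    (x : PiLp 2 fun _ : Fin N => H) (i : Fin N) :
    phi M x i = ∑ j, M i j (x j) := by
  have h : phi M x i = (∑ j, (M i j) ∘L ContinuousLinearMap.proj j) x := rfl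
  rw [h, ContinuousLinearMap.sum_apply]
  rfl

/-- The single-coordinate inclusion `H →L[ℂ] H^N`. -/
def sing (j : Fin N) : H →L[ℂ] (PiLp 2 fun _ : Fin N => H) :=
  (PiLp.continuousLinearEquiv 2 ℂ (fun _ : Fin N => H)).symm.toContinuousLinearMap ∘L
    ContinuousLinearMap.pi fun k => if k = j then ContinuousLinearMap.id ℂ H else 0

lemma sing_apply (j : Fin N) (h : H) (k : Fin N) :
    sing j h k = if k = j then h else 0 := by
  have h1 : sing j h k = (if k = j then ContinuousLinearMap.id ℂ H else 0) h := rfl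
  rw [h1]
  split_ifs <;> rfl

lemma piLp_sum_apply {ι : Type*} (s : Finset ι) (f : ι → PiLp 2 fun _ : Fin N => H)
    (k : Fin N) : (∑ j ∈ s, f j) k = ∑ j ∈ s, f j k := by
  calc (∑ j ∈ s, f j) k
      = ((PiLp.continuousLinearEquiv 2 ℂ (fun _ : Fin N => H)) (∑ j ∈ s, f j)) k := rfl
    _ = (∑ j ∈ s, (PiLp.continuousLinearEquiv 2 ℂ (fun _ : Fin N => H)) (f j)) k := by
        rw [map_sum]
    _ = ∑ j ∈ s, ((PiLp.continuousLinearEquiv 2 ℂ (fun _ : Fin N => H)) (f j)) k := by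
        rw [Finset.sum_apply]
    _ = ∑ j ∈ s, f j k := rfl

/-- Matrix of operators associated to an operator on `H^N`. -/
def psi (T : (PiLp 2 fun _ : Fin N => H) →L[ℂ] (PiLp 2 fun _ : Fin N => H)) :
    Matrix (Fin N) (Fin N) (H →L[ℂ] H) :=
  Matrix.of fun i j =>
    (ContinuousLinearMap.proj i : (∀ _ : Fin N, H) →L[ℂ] H) ∘L
      ((PiLp.continuousLinearEquiv 2 ℂ (fun _ : Fin N => H)).toContinuousLinearMap ∘L (T ∘L sing j))

lemma psi_apply (T : (PiLp 2 fun _ : Fin N => H) →L[ℂ] (PiLp 2 fun _ : Fin N => H))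
    (i j : Fin N) (v : H) : psi T i j v = T (sing j v) i := rfl

lemma psi_phi (M : Matrix (Fin N) (Fin N) (H →L[ℂ] H)) : psi (phi M) = M := by
  ext i j v
  rw [psi_apply, phi_apply]
  rw [Finset.sum_eq_single j]
  · rw [sing_apply]; simp
  · intro k _ hk
    rw [sing_apply]
    simp [hk]
  · simp

lemma phi_psi (T : (PiLp 2 fun _ : Fin N => H) →L[ℂ] (PiLp 2 fun _ : Fin N => H)) :
    phi (psi T) = T := by
  refine ContinuousLinearMap.ext fun x => ?_
  refine (PiLp.continuousLinearEquiv 2 ℂ (fun _ : Fin N => H)).injective (funext fun i => ?_)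
  show phi (psi T) x i = T x i
  rw [phi_apply]
  have hx : ∑ j, sing (H := H) j (x j) = x := by
    refine (PiLp.continuousLinearEquiv 2 ℂ (fun _ : Fin N => H)).injective
      (funext fun k => ?_)
    show (∑ j, sing (H := H) j (x j)) k = x k
    rw [piLp_sum_apply]
    simp only [sing_apply]
    simp [Finset.sum_ite_eq']
  calc ∑ j, psi T i j (x j) = ∑ j, T (sing j (x j)) i := by simp only [psi_apply]
    _ = (∑ j, T (sing j (x j))) i := (piLp_sum_apply _ _ _).symm
    _ = T x i := by rw [← map_sum, hx]

lemma phi_mul (M M' : Matrix (Fin N) (Fin N) (H →L[ℂ] H)) :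
    phi (M * M') = phi M * phi M' := by
  refine ContinuousLinearMap.ext fun x => ?_
  refine (PiLp.continuousLinearEquiv 2 ℂ (fun _ : Fin N => H)).injective (funext fun i => ?_)
  show phi (M * M') x i = phi M (phi M' x) i
  rw [phi_apply, phi_apply]
  simp only [phi_apply, Matrix.mul_apply, ContinuousLinearMap.sum_apply,
    ContinuousLinearMap.mul_apply, map_sum]
  exact Finset.sum_comm

lemma phi_conjTranspose (M : Matrix (Fin N) (Fin N) (H →L[ℂ] H)) :
    phi Mᴴ = ContinuousLinearMap.adjoint (phi M) := by
  rw [ContinuousLinearMap.eq_adjoint_iff]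
  intro x y
  simp only [PiLp.inner_apply, phi_apply, Matrix.conjTranspose_apply,
    ContinuousLinearMap.star_eq_adjoint, sum_inner, inner_sum,
    ContinuousLinearMap.adjoint_inner_left]
  exact Finset.sum_comm

lemma phi_nonneg (M : Matrix (Fin N) (Fin N) (H →L[ℂ] H)) (h1 : Mᴴ = M)
    (h2 : ∀ h : Fin N → H, 0 ≤ ∑ i, ∑ j, ⟪M i j (h j), h i⟫_ℂ) :
    0 ≤ phi M := by
  rw [ContinuousLinearMap.nonneg_iff_isPositive, ContinuousLinearMap.isPositive_def']
  constructor
  · rw [IsSelfAdjoint, ContinuousLinearMap.star_eq_adjoint, ← phi_conjTranspose, h1]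
  · intro x
    have hinner : ⟪phi M x, x⟫_ℂ = ∑ i, ∑ j, ⟪M i j (x j), x i⟫_ℂ := by
      simp only [PiLp.inner_apply, phi_apply, sum_inner]
    have hz : 0 ≤ ⟪phi M x, x⟫_ℂ := by
      rw [hinner]; exact h2 fun i => x i
    have := (Complex.le_def.mp hz).1
    simpa [ContinuousLinearMap.reApplyInnerSelf] using this

end

end Stmt14Aux

open Stmt14Aux

section Collapse

variable {G : Type*} {H : Type*} [NormedAddCommGroup H] [InnerProductSpace ℂ H]

lemma stmt14_collapse [DecidableEq G] (K : G → G → (H →L[ℂ] H)) (X : Finset G) {N : ℕ}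
    (r s : Fin N → G) (hr : ∀ j, r j ∈ X) (hs : ∀ i, s i ∈ X) (v w : Fin N → H) :
    ∑ x ∈ X, ∑ y ∈ X,
        ⟪K x y (∑ j, if y = r j then v j else 0), (∑ i, if x = s i then w i else 0)⟫_ℂ
      = ∑ i, ∑ j, ⟪K (s i) (r j) (v j), w i⟫_ℂ := by
  have key : ∀ x y, ⟪K x y (∑ j, if y = r j then v j else 0),
      (∑ i, if x = s i then w i else 0)⟫_ℂ
      = ∑ i, ∑ j, if x = s i then (if y = r j then ⟪K x y (v j), w i⟫_ℂ else 0) else 0 := by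
    intro x y
    rw [map_sum, sum_inner, Finset.sum_comm]
    refine Finset.sum_congr rfl fun i _ => ?_
    rw [inner_sum]
    refine Finset.sum_congr rfl fun j _ => ?_
    split_ifs with h1 h2 <;> simp
  calc ∑ x ∈ X, ∑ y ∈ X,
        ⟪K x y (∑ j, if y = r j then v j else 0), (∑ i, if x = s i then w i else 0)⟫_ℂ
      = ∑ x ∈ X, ∑ y ∈ X, ∑ i, ∑ j,
          if x = s i then (if y = r j then ⟪K x y (v j), w i⟫_ℂ else 0) else 0 := by
        exact Finset.sum_congr rfl fun x _ => Finset.sum_congr rfl fun y _ => key x y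
    _ = ∑ x ∈ X, ∑ i, ∑ y ∈ X, ∑ j,
          if x = s i then (if y = r j then ⟪K x y (v j), w i⟫_ℂ else 0) else 0 := by
        exact Finset.sum_congr rfl fun x _ => Finset.sum_comm
    _ = ∑ i, ∑ x ∈ X, ∑ y ∈ X, ∑ j,
          if x = s i then (if y = r j then ⟪K x y (v j), w i⟫_ℂ else 0) else 0 :=
        Finset.sum_comm
    _ = ∑ i, ∑ x ∈ X, ∑ j, ∑ y ∈ X,
          if x = s i then (if y = r j then ⟪K x y (v j), w i⟫_ℂ else 0) else 0 := by
        exact Finset.sum_congr rfl fun i _ => Finset.sum_congr rfl fun x _ =>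
          Finset.sum_comm
    _ = ∑ i, ∑ j, ∑ x ∈ X, ∑ y ∈ X,
          if x = s i then (if y = r j then ⟪K x y (v j), w i⟫_ℂ else 0) else 0 := by
        exact Finset.sum_congr rfl fun i _ => Finset.sum_comm
    _ = ∑ i, ∑ j, ⟪K (s i) (r j) (v j), w i⟫_ℂ := by
        refine Finset.sum_congr rfl fun i _ => Finset.sum_congr rfl fun j _ => ?_
        have h1 : ∀ x, (∑ y ∈ X,
            if x = s i then (if y = r j then ⟪K x y (v j), w i⟫_ℂ else 0) else 0)
            = if x = s i then ⟪K x (r j) (v j), w i⟫_ℂ else 0 := by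
          intro x
          by_cases hx : x = s i
          · simp only [hx, if_true]
            rw [Finset.sum_ite_eq' X (r j) fun y => ⟪K (s i) y (v j), w i⟫_ℂ]
            simp [hr j]
          · simp [hx]
        rw [Finset.sum_congr rfl fun x _ => h1 x]
        rw [Finset.sum_ite_eq' X (s i) fun x => ⟪K x (r j) (v j), w i⟫_ℂ]
        simp [hs i]

end Collapse

set_option maxHeartbeats 2000000 in
/-- Schwarz inequality for operator-valued kernels: if `K` is a positive definite
kernel on a finite complete set `X ⊆ G` with `K(x,x) = 1` and `*`-symmetric, and
`K(c_i b_i, c_j) = K(c_i b_i, c_i) K(c_i, c_j)` for all `i,j`, then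
`[K(c_i b_i, c_j b_j)] ≥ [K(c_i b_i, c_i) K(c_i, c_j) K(c_j, c_j b_j)]` in
`M_N(B(H))`. -/
theorem stmt14 {G : Type*} [Group G]
    {H : Type*} [NormedAddCommGroup H] [InnerProductSpace ℂ H] [CompleteSpace H]
    (K : G → G → (H →L[ℂ] H)) (X : Finset G)
    (hpos : ∀ ξ : G → H,
      0 ≤ ∑ x ∈ X, ∑ y ∈ X, ⟪K x y (ξ y), ξ x⟫_ℂ)
    (hone : ∀ x ∈ X, K x x = 1)
    (hsym : ∀ x ∈ X, ∀ y ∈ X, K x y = ContinuousLinearMap.adjoint (K y x))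
    (N : ℕ) (c b : Fin N → G)
    (hc : ∀ i, c i ∈ X) (hb : ∀ i, b i ∈ X) (hcb : ∀ i, c i * b i ∈ X)
    (hfact : ∀ i j, K (c i * b i) (c j) = K (c i * b i) (c i) * K (c i) (c j)) :
    ∃ D : Matrix (Fin N) (Fin N) (H →L[ℂ] H),
      (Matrix.of fun i j => K (c i * b i) (c j * b j)) -
        (Matrix.of fun i j =>
          K (c i * b i) (c i) * K (c i) (c j) * K (c j) (c j * b j)) =
      Dᴴ * D := by
  classical
  -- star-symmetry in `star` form
  have hsym' : ∀ x ∈ X, ∀ y ∈ X, star (K y x) = K x y := by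
    intro x hx y hy
    rw [ContinuousLinearMap.star_eq_adjoint]
    exact (hsym x hx y hy).symm
  -- the difference matrix
  set A : Matrix (Fin N) (Fin N) (H →L[ℂ] H) :=
    (Matrix.of fun i j => K (c i * b i) (c j * b j)) -
      (Matrix.of fun i j =>
        K (c i * b i) (c i) * K (c i) (c j) * K (c j) (c j * b j)) with hA
  -- factorization of `K (c i) (c j * b j)`
  have e1 : ∀ i j, K (c i) (c j * b j) = K (c i) (c j) * K (c j) (c j * b j) := by
    intro i j
    calc K (c i) (c j * b j) = star (K (c j * b j) (c i)) := (hsym' _ (hc i) _ (hcb j)).symm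
      _ = star (K (c j * b j) (c j) * K (c j) (c i)) := by rw [hfact j i]
      _ = star (K (c j) (c i)) * star (K (c j * b j) (c j)) := star_mul _ _
      _ = K (c i) (c j) * K (c j) (c j * b j) := by
          rw [hsym' _ (hc i) _ (hc j), hsym' _ (hc j) _ (hcb j)]
  -- conjugate-symmetry of `A`
  have hermA : Aᴴ = A := by
    refine Matrix.ext fun i j => ?_
    show star (A j i) = A i j
    rw [hA]
    simp only [Matrix.sub_apply, Matrix.of_apply, Matrix.conjTranspose_apply, star_sub,
      star_mul]
    rw [hsym' _ (hcb i) _ (hcb j), hsym' _ (hcb i) _ (hc i), hsym' _ (hc i) _ (hc j),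
      hsym' _ (hc j) _ (hcb j), ← mul_assoc]
  -- positivity of the quadratic form of `A`
  have hsum : ∀ h : Fin N → H, 0 ≤ ∑ i, ∑ j, ⟪A i j (h j), h i⟫_ℂ := by
    intro h
    have hx := hpos fun y =>
      (∑ i, if y = c i * b i then h i else 0) -
        (∑ i, if y = c i then K (c i) (c i * b i) (h i) else 0)
    have expand : ∀ x y : G,
        ⟪K x y ((∑ i, if y = c i * b i then h i else 0)
            - (∑ i, if y = c i then K (c i) (c i * b i) (h i) else 0)),
          (∑ i, if x = c i * b i then h i else 0)
            - (∑ i, if x = c i then K (c i) (c i * b i) (h i) else 0)⟫_ℂ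
        = (⟪K x y (∑ i, if y = c i * b i then h i else 0),
              ∑ i, if x = c i * b i then h i else 0⟫_ℂ
            - ⟪K x y (∑ i, if y = c i then K (c i) (c i * b i) (h i) else 0),
                ∑ i, if x = c i * b i then h i else 0⟫_ℂ)
          - (⟪K x y (∑ i, if y = c i * b i then h i else 0),
                ∑ i, if x = c i then K (c i) (c i * b i) (h i) else 0⟫_ℂ
            - ⟪K x y (∑ i, if y = c i then K (c i) (c i * b i) (h i) else 0),
                ∑ i, if x = c i then K (c i) (c i * b i) (h i) else 0⟫_ℂ) := by
      intro x y
      rw [map_sub, inner_sub_left, inner_sub_right, inner_sub_right]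
      ring
    rw [Finset.sum_congr rfl fun x _ => Finset.sum_congr rfl fun y _ => expand x y] at hx
    simp only [Finset.sum_sub_distrib] at hx
    rw [stmt14_collapse K X (fun j => c j * b j) (fun i => c i * b i) hcb hcb h h,
      stmt14_collapse K X c (fun i => c i * b i) hc hcb
        (fun j => K (c j) (c j * b j) (h j)) h,
      stmt14_collapse K X (fun j => c j * b j) c hcb hc h
        (fun i => K (c i) (c i * b i) (h i)),
      stmt14_collapse K X c c hc hc (fun j => K (c j) (c j * b j) (h j))
        (fun i => K (c i) (c i * b i) (h i))] at hx
    -- identify each term with the entries of `A`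
    have term2 : ∀ i j, ⟪K (c i * b i) (c j) (K (c j) (c j * b j) (h j)), h i⟫_ℂ
        = ⟪(K (c i * b i) (c i) * K (c i) (c j) * K (c j) (c j * b j)) (h j), h i⟫_ℂ := by
      intro i j
      rw [← ContinuousLinearMap.mul_apply, hfact i j]
    have term3 : ∀ i j, ⟪K (c i) (c j * b j) (h j), K (c i) (c i * b i) (h i)⟫_ℂ
        = ⟪(K (c i * b i) (c i) * K (c i) (c j) * K (c j) (c j * b j)) (h j), h i⟫_ℂ := by
      intro i j
      rw [← ContinuousLinearMap.adjoint_inner_left (K (c i) (c i * b i)),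
        ← hsym _ (hcb i) _ (hc i), e1 i j]
      simp only [ContinuousLinearMap.mul_apply, mul_assoc]
    have term4 : ∀ i j,
        ⟪K (c i) (c j) (K (c j) (c j * b j) (h j)), K (c i) (c i * b i) (h i)⟫_ℂ
        = ⟪(K (c i * b i) (c i) * K (c i) (c j) * K (c j) (c j * b j)) (h j), h i⟫_ℂ := by
      intro i j
      rw [← ContinuousLinearMap.adjoint_inner_left (K (c i) (c i * b i)),
        ← hsym _ (hcb i) _ (hc i)]
      simp only [ContinuousLinearMap.mul_apply, mul_assoc]
    have final : ∀ i j, (⟪K (c i * b i) (c j * b j) (h j), h i⟫_ℂ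
          - ⟪K (c i * b i) (c j) (K (c j) (c j * b j) (h j)), h i⟫_ℂ)
          - (⟪K (c i) (c j * b j) (h j), K (c i) (c i * b i) (h i)⟫_ℂ
          - ⟪K (c i) (c j) (K (c j) (c j * b j) (h j)), K (c i) (c i * b i) (h i)⟫_ℂ)
        = ⟪A i j (h j), h i⟫_ℂ := by
      intro i j
      rw [term2, term3, term4, hA]
      simp only [Matrix.sub_apply, Matrix.of_apply, ContinuousLinearMap.sub_apply,
        inner_sub_left]
      ring
    calc (0 : ℂ) ≤ _ := hx
      _ = ∑ i, ∑ j, ⟪A i j (h j), h i⟫_ℂ := by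
        rw [← Finset.sum_sub_distrib, ← Finset.sum_sub_distrib, ← Finset.sum_sub_distrib]
        refine Finset.sum_congr rfl fun i _ => ?_
        rw [← Finset.sum_sub_distrib, ← Finset.sum_sub_distrib, ← Finset.sum_sub_distrib]
        exact Finset.sum_congr rfl fun j _ => final i j
  -- positivity of the associated operator and the square root
  have hApos : 0 ≤ phi A := phi_nonneg A hermA hsum
  set S := CFC.sqrt (phi A) with hS
  have hSsq : S * S = phi A := CFC.sqrt_mul_sqrt_self _ hApos
  have hSnn : (0 : _) ≤ S := CFC.sqrt_nonneg _
  have hSsa : IsSelfAdjoint S :=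
    ((ContinuousLinearMap.nonneg_iff_isPositive S).mp hSnn).isSelfAdjoint
  refine ⟨psi S, ?_⟩
  have key : phi ((psi S)ᴴ * psi S) = phi A := by
    rw [phi_mul, phi_conjTranspose, phi_psi, ← ContinuousLinearMap.star_eq_adjoint,
      hSsa.star_eq, hSsq]
  calc (Matrix.of fun i j => K (c i * b i) (c j * b j)) -
        (Matrix.of fun i j =>
          K (c i * b i) (c i) * K (c i) (c j) * K (c j) (c j * b j)) = A := hA.symm
    _ = psi (phi A) := (psi_phi A).symm
    _ = psi (phi ((psi S)ᴴ * psi S)) := by rw [key]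
    _ = (psi S)ᴴ * psi S := psi_phi _
end
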